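/- (Discrete non-commutative hungry Toda-I lattice from orthogonality.) Define ω_n^{(α)} := H_{n−1}^{(α+1)}·(H_{n−1}^{(α)})^{−1} for n ≥ 1 and ε_n^{(α)} := H_n^{(α)}·(H_{n−1}^{(α+θ)})^{−1} for n ≥ 1, with ε_0^{(α)} := 0. Then for all n ≥ 1 and α ∈ ℕ the discrete non-commutative hungry Toda-I lattice holds: ω_{n+1}^{(α)}·ε_n^{(α)} = ε_n^{(α+1)}·ω_n^{(α+θ)} and ω_n^{(α+θ)} + ε_{n−1}^{(α+1)} = ω_n^{(α)} + ε_n^{(α)}. -/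

import Mathlib

/-! Two contiguity relations identify the recurrence coefficients. Writing `σ_n^{(α)}` for the
coefficient of `x^(n-1)` in `P_n^{(α)}` and `D := σ_n^{(α+1)} - σ_{n+1}^{(α)}`, the polynomial
`x P_n^{(α+1)} - P_{n+1}^{(α)} - D P_n^{(α)}` has degree `< n` and is `⟨·, x^i⟩_θ^α`-orthogonal for
`i < n`, hence vanishes because `M_n^{(α)}` is invertible; pairing with `x^n` gives
`H_n^{(α+1)} = D H_n^{(α)}`, i.e. `ω_{n+1}^{(α)} = D`. Since `⟨f, x^{i+1}⟩_θ^α = ⟨f, x^i⟩_θ^{α+θ}`,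
the same argument shows that `P_{n+1}^{(α)} - P_{n+1}^{(α+θ)}` is a left multiple of
`P_n^{(α+θ)}`, whence `ε_n^{(α)} = σ_n^{(α)} - σ_n^{(α+θ)}`. The additive lattice equation is then a
telescoping identity between the `σ`'s, and the multiplicative one is a cancellation of `H`'s. -/

open MeasureTheory Polynomial Matrix Filter

/-- Evaluation of a matrix polynomial at a real scalar. -/
noncomputable def mpEval {p : ℕ} (f : Polynomial (Matrix (Fin p) (Fin p) ℝ)) (x : ℝ) :
    Matrix (Fin p) (Fin p) ℝ :=
  f.sum fun k a => x ^ k • a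

/-- The adjacent matrix-valued θ-deformed bilinear form
`⟨f, g⟩_θ^α = ∫ f(x) · x^α · W(x) · g(x^θ)ᵀ dx`, computed entrywise. -/
noncomputable def bform {p : ℕ} (θ : ℕ) (W : ℝ → Matrix (Fin p) (Fin p) ℝ) (α : ℕ)
    (f g : Polynomial (Matrix (Fin p) (Fin p) ℝ)) : Matrix (Fin p) (Fin p) ℝ :=
  Matrix.of fun i j => ∫ x : ℝ, (mpEval f x * (x ^ α • W x) * (mpEval g (x ^ θ))ᵀ) i j

/-- A matrix polynomial is monic of degree `n`: the `x^n` coefficient is `I_p`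
and all higher coefficients vanish. -/
def MonicDeg {p : ℕ} (f : Polynomial (Matrix (Fin p) (Fin p) ℝ)) (n : ℕ) : Prop :=
  f.coeff n = 1 ∧ ∀ k : ℕ, n < k → f.coeff k = 0

/-- The k-th moment `m_k = ∫ x^k W(x) dx`, computed entrywise. -/
noncomputable def mom {p : ℕ} (W : ℝ → Matrix (Fin p) (Fin p) ℝ) (k : ℕ) :
    Matrix (Fin p) (Fin p) ℝ :=
  Matrix.of fun i j => ∫ x : ℝ, x ^ k * W x i j

/-- The block moment matrix `M_n^{(α)} = (m_{α+i+jθ})_{i,j=0}^{n-1}`, as an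
`n × n` matrix over the ring of `p × p` real matrices. -/
noncomputable def momMat {p : ℕ} (θ : ℕ) (W : ℝ → Matrix (Fin p) (Fin p) ℝ) (n α : ℕ) :
    Matrix (Fin n) (Fin n) (Matrix (Fin p) (Fin p) ℝ) :=
  Matrix.of fun i j => mom W (α + (i : ℕ) + (j : ℕ) * θ)

section SubleadingCoeff

variable {R : Type*} [Semiring R]

/-- The coefficient of `x ^ (n - 1)` in `f`, with the convention that it is `0` for `n = 0`. -/
noncomputable def subleadingCoeff (f : R[X]) (n : ℕ) : R := (X * f).coeff n

lemma subleadingCoeff_zero (f : R[X]) : subleadingCoeff f 0 = 0 :=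
  coeff_X_mul_zero f

lemma subleadingCoeff_succ (f : R[X]) (n : ℕ) : subleadingCoeff f (n + 1) = f.coeff n :=
  coeff_X_mul f n

end SubleadingCoeff

section MonicDeg

variable {p : ℕ} {f g h : Polynomial (Matrix (Fin p) (Fin p) ℝ)} {n : ℕ}

lemma MonicDeg.X_mul (hf : MonicDeg f n) : MonicDeg (X * f) (n + 1) :=
  ⟨by rw [coeff_X_mul, hf.1], fun k hk => by
    obtain ⟨j, rfl⟩ := Nat.exists_eq_succ_of_ne_zero (by omega : k ≠ 0)
    rw [coeff_X_mul, hf.2 j (by omega)]⟩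

lemma MonicDeg.coeff_sub_sub_C_mul_eq_zero (hf : MonicDeg f (n + 1)) (hg : MonicDeg g (n + 1))
    (hh : MonicDeg h n) {k : ℕ} (hk : n ≤ k) :
    (f - g - C ((f - g).coeff n) * h).coeff k = 0 := by
  rw [coeff_sub, coeff_C_mul]
  rcases hk.eq_or_lt with rfl | hk
  · rw [hh.1, mul_one, sub_self]
  rw [coeff_sub, hh.2 k hk, mul_zero, sub_zero]
  rcases (Nat.succ_le_of_lt hk).eq_or_lt with rfl | hk
  · rw [hf.1, hg.1, sub_self]
  · rw [hf.2 k hk, hg.2 k hk, sub_self]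

end MonicDeg

section Pairing

variable {p : ℕ} (θ : ℕ) (W : ℝ → Matrix (Fin p) (Fin p) ℝ)

lemma mpEval_eq_eval (f : Polynomial (Matrix (Fin p) (Fin p) ℝ)) (x : ℝ) :
    mpEval f x = f.eval (algebraMap ℝ _ x) := by
  rw [mpEval, eval_eq_sum]
  refine Finset.sum_congr rfl fun k _ => ?_
  dsimp only
  rw [← map_pow, ← Algebra.commutes, ← Algebra.smul_def]

lemma mpEval_X_mul (f : Polynomial (Matrix (Fin p) (Fin p) ℝ)) (x : ℝ) :
    mpEval (X * f) x = x • mpEval f x := by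
  rw [mpEval_eq_eval, mpEval_eq_eval, (commute_X f).eq, eval_mul_X, ← Algebra.commutes,
    ← Algebra.smul_def]

lemma mpEval_X_pow (i : ℕ) (x : ℝ) :
    mpEval (X ^ i : Polynomial (Matrix (Fin p) (Fin p) ℝ)) x = x ^ i • 1 := by
  rw [mpEval_eq_eval, X_pow_eq_monomial, eval_monomial, one_mul, ← map_pow,
    Algebra.algebraMap_eq_smul_one]

lemma bform_X_mul_left (α : ℕ) (f g : Polynomial (Matrix (Fin p) (Fin p) ℝ)) :
    bform θ W α (X * f) g = bform θ W (α + 1) f g := by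
  ext i j
  simp only [bform, of_apply, mpEval_X_mul, smul_mul_assoc, mul_smul_comm, smul_smul, pow_succ]

lemma bform_X_mul_right (α : ℕ) (f g : Polynomial (Matrix (Fin p) (Fin p) ℝ)) :
    bform θ W α f (X * g) = bform θ W (α + θ) f g := by
  ext i j
  simp only [bform, of_apply, mpEval_X_mul, transpose_smul, mul_smul_comm, smul_mul_assoc,
    smul_smul, pow_add, mul_comm]

end Pairing

section Moments

variable {p : ℕ} (θ : ℕ) (W : ℝ → Matrix (Fin p) (Fin p) ℝ)

lemma pow_smul_mul_apply (m : ℕ) (a : Matrix (Fin p) (Fin p) ℝ) (x : ℝ) (i j : Fin p) :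
    (x ^ m • (a * W x)) i j = ∑ l, a i l * (x ^ m * W x l j) := by
  simp only [Matrix.smul_apply, mul_apply, smul_eq_mul, Finset.mul_sum]
  exact Finset.sum_congr rfl fun l _ => by ring

noncomputable def momentPairing (α i : ℕ) :
    Polynomial (Matrix (Fin p) (Fin p) ℝ) →ₗ[Matrix (Fin p) (Fin p) ℝ] Matrix (Fin p) (Fin p) ℝ :=
  lsum fun k => LinearMap.toSpanSingleton _ _ (mom W (α + k + i * θ))

variable {W} (hWint : ∀ (k : ℕ) (i j : Fin p), Integrable fun x : ℝ => x ^ k * W x i j)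
include hWint

lemma integrable_pow_smul_mul_apply (m : ℕ) (a : Matrix (Fin p) (Fin p) ℝ) (i j : Fin p) :
    Integrable fun x : ℝ => (x ^ m • (a * W x)) i j := by
  simp_rw [pow_smul_mul_apply]
  exact integrable_finsetSum _ fun l _ => (hWint m l j).const_mul _

lemma integral_pow_smul_mul_apply (m : ℕ) (a : Matrix (Fin p) (Fin p) ℝ) (i j : Fin p) :
    ∫ x : ℝ, (x ^ m • (a * W x)) i j = (a * mom W m) i j := by
  simp_rw [pow_smul_mul_apply]
  rw [integral_finsetSum _ fun l _ => (hWint m l j).const_mul _, mul_apply]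
  simp only [integral_const_mul, mom, of_apply]

lemma bform_X_pow_eq_momentPairing (α i : ℕ) (f : Polynomial (Matrix (Fin p) (Fin p) ℝ)) :
    bform θ W α f (X ^ i) = momentPairing θ W α i f := by
  have integrand : ∀ x : ℝ, mpEval f x * (x ^ α • W x) * (mpEval (X ^ i) (x ^ θ))ᵀ =
      ∑ k ∈ f.support, x ^ (α + k + i * θ) • (f.coeff k * W x) := by
    intro x
    rw [mpEval_X_pow, mpEval, Polynomial.sum_def, Finset.sum_mul, Finset.sum_mul]
    refine Finset.sum_congr rfl fun k _ => ?_
    rw [transpose_smul, transpose_one, mul_smul_comm, mul_one, smul_mul_assoc, mul_smul_comm,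
      smul_smul, smul_smul, ← pow_mul, ← pow_add, ← pow_add]
    ring_nf
  ext r s
  simp only [bform, of_apply, integrand, Matrix.sum_apply]
  rw [integral_finsetSum _ fun k _ => integrable_pow_smul_mul_apply hWint _ _ r s,
    momentPairing, lsum_apply, Polynomial.sum_def, Matrix.sum_apply]
  simp only [integral_pow_smul_mul_apply hWint, LinearMap.toSpanSingleton_apply, smul_eq_mul]

variable {α i : ℕ} {f g : Polynomial (Matrix (Fin p) (Fin p) ℝ)}

lemma bform_add_left :
    bform θ W α (f + g) (X ^ i) = bform θ W α f (X ^ i) + bform θ W α g (X ^ i) := by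
  simp only [bform_X_pow_eq_momentPairing θ hWint, map_add]

lemma bform_sub_left :
    bform θ W α (f - g) (X ^ i) = bform θ W α f (X ^ i) - bform θ W α g (X ^ i) := by
  simp only [bform_X_pow_eq_momentPairing θ hWint, map_sub]

lemma bform_C_mul_left (a : Matrix (Fin p) (Fin p) ℝ) :
    bform θ W α (C a * f) (X ^ i) = a * bform θ W α f (X ^ i) := by
  simp only [bform_X_pow_eq_momentPairing θ hWint, C_mul', map_smul, smul_eq_mul]

lemma eq_zero_of_bform_X_pow_eq_zero {n : ℕ} (hM : IsUnit (momMat θ W n α))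
    (hf : ∀ k, n ≤ k → f.coeff k = 0) (horth : ∀ i < n, bform θ W α f (X ^ i) = 0) :
    f = 0 := by
  have hsupp : f.support ⊆ Finset.range n := fun k hk =>
    Finset.mem_range.2 (not_le.1 fun hnk => mem_support_iff.1 hk (hf k hnk))
  have hvec : vecMul (fun k : Fin n => f.coeff k) (momMat θ W n α) = 0 := by
    funext i
    rw [Pi.zero_apply, ← horth i i.isLt, bform_X_pow_eq_momentPairing θ hWint, momentPairing,
      lsum_apply, sum_eq_of_subset _ (fun _ => map_zero _) hsupp, ← Fin.sum_univ_eq_sum_range]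
    simp [vecMul, dotProduct, momMat]
  have hcoeff := congrFun (vecMul_injective_of_isUnit hM (hvec.trans (zero_vecMul _).symm))
  refine Polynomial.ext fun k => ?_
  rw [coeff_zero]
  by_cases hk : k < n
  · exact hcoeff ⟨k, hk⟩
  · exact hf k (not_lt.1 hk)

end Moments

lemma isUnit_momMat {p θ : ℕ} {W : ℝ → Matrix (Fin p) (Fin p) ℝ}
    (hM : ∀ (n α : ℕ), 1 ≤ n → IsUnit (momMat θ W n α)) (n α : ℕ) :
    IsUnit (momMat θ W n α) := by
  rcases n with _ | n
  · exact isUnit_of_subsingleton _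
  · exact hM _ α n.succ_pos

section OrthogonalPolynomials

variable {p θ : ℕ} {W : ℝ → Matrix (Fin p) (Fin p) ℝ}
  (hWint : ∀ (k : ℕ) (i j : Fin p), Integrable fun x : ℝ => x ^ k * W x i j)
  (hM : ∀ (n α : ℕ), 1 ≤ n → IsUnit (momMat θ W n α))
  {P : ℕ → ℕ → Polynomial (Matrix (Fin p) (Fin p) ℝ)}
  (hPmonic : ∀ n α : ℕ, MonicDeg (P n α) n)
  (hPorth : ∀ n α : ℕ, ∀ i < n, bform θ W α (P n α) (X ^ i) = 0)
include hWint hM hPmonic hPorth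

lemma X_mul_P_eq (n α : ℕ) :
    X * P n (α + 1) = P (n + 1) α +
      C (subleadingCoeff (P n (α + 1)) n - subleadingCoeff (P (n + 1) α) (n + 1)) * P n α := by
  have hdeg := fun k (hk : n ≤ k) => (hPmonic n (α + 1)).X_mul.coeff_sub_sub_C_mul_eq_zero
    (hPmonic (n + 1) α) (hPmonic n α) hk
  have horth : ∀ i < n, bform θ W α (X * P n (α + 1) - P (n + 1) α
      - C ((X * P n (α + 1) - P (n + 1) α).coeff n) * P n α) (X ^ i) = 0 := fun i hi => by
    rw [bform_sub_left θ hWint, bform_sub_left θ hWint, bform_C_mul_left θ hWint,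
      bform_X_mul_left, hPorth _ _ i hi, hPorth _ _ i (by omega), hPorth _ _ i hi, mul_zero,
      sub_zero, sub_self]
  have hzero := eq_zero_of_bform_X_pow_eq_zero θ hWint (isUnit_momMat hM n α) hdeg horth
  rw [sub_sub, sub_eq_zero, coeff_sub, ← subleadingCoeff_succ (P (n + 1) α) n] at hzero
  exact hzero

lemma P_succ_eq (n α : ℕ) :
    P (n + 1) α = P (n + 1) (α + θ) +
      C (subleadingCoeff (P (n + 1) α) (n + 1) - subleadingCoeff (P (n + 1) (α + θ)) (n + 1)) *
        P n (α + θ) := by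
  have hdeg := fun k (hk : n ≤ k) => (hPmonic (n + 1) α).coeff_sub_sub_C_mul_eq_zero
    (hPmonic (n + 1) (α + θ)) (hPmonic n (α + θ)) hk
  have horth : ∀ i < n, bform θ W (α + θ) (P (n + 1) α - P (n + 1) (α + θ)
      - C ((P (n + 1) α - P (n + 1) (α + θ)).coeff n) * P n (α + θ)) (X ^ i) = 0 :=
    fun i hi => by
      rw [bform_sub_left θ hWint, bform_sub_left θ hWint, bform_C_mul_left θ hWint,
        ← bform_X_mul_right, ← pow_succ', hPorth _ _ (i + 1) (by omega), hPorth _ _ i (by omega),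
        hPorth _ _ i hi, mul_zero, sub_zero, sub_self]
  have hzero := eq_zero_of_bform_X_pow_eq_zero θ hWint (isUnit_momMat hM n (α + θ)) hdeg horth
  rwa [sub_sub, sub_eq_zero, coeff_sub, ← subleadingCoeff_succ (P (n + 1) α) n,
    ← subleadingCoeff_succ (P (n + 1) (α + θ)) n] at hzero

variable {H : ℕ → ℕ → Matrix (Fin p) (Fin p) ℝ}
  (hHdef : ∀ n α : ℕ, H n α = bform θ W α (P n α) (X ^ n))
include hHdef

lemma H_add_one_eq (n α : ℕ) :
    H n (α + 1) =
      (subleadingCoeff (P n (α + 1)) n - subleadingCoeff (P (n + 1) α) (n + 1)) * H n α := by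
  rw [hHdef, hHdef, ← bform_X_mul_left, X_mul_P_eq hWint hM hPmonic hPorth, bform_add_left θ hWint,
    bform_C_mul_left θ hWint, hPorth _ _ n n.lt_succ_self, zero_add]

lemma H_succ_eq (n α : ℕ) :
    H (n + 1) α = (subleadingCoeff (P (n + 1) α) (n + 1) -
      subleadingCoeff (P (n + 1) (α + θ)) (n + 1)) * H n (α + θ) := by
  rw [hHdef, hHdef, pow_succ', bform_X_mul_right]
  conv_lhs => rw [P_succ_eq hWint hM hPmonic hPorth]
  rw [bform_add_left θ hWint, bform_C_mul_left θ hWint, hPorth _ _ n n.lt_succ_self, zero_add]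

end OrthogonalPolynomials

theorem statement11_general
    (p θ : ℕ)
    (W : ℝ → Matrix (Fin p) (Fin p) ℝ)
    (hWint : ∀ (k : ℕ) (i j : Fin p), Integrable fun x : ℝ => x ^ k * W x i j)
    (hM : ∀ (n α : ℕ), 1 ≤ n → IsUnit (momMat θ W n α))
    (P : ℕ → ℕ → Polynomial (Matrix (Fin p) (Fin p) ℝ))
    (hPmonic : ∀ n α : ℕ, MonicDeg (P n α) n)
    (hPorth : ∀ n α : ℕ, ∀ i < n, bform θ W α (P n α) (X ^ i) = 0)
    (H : ℕ → ℕ → Matrix (Fin p) (Fin p) ℝ)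
    (hHdef : ∀ n α : ℕ, H n α = bform θ W α (P n α) (X ^ n))
    (hHunit : ∀ n α : ℕ, IsUnit (H n α))
    (ω ε : ℕ → ℕ → Matrix (Fin p) (Fin p) ℝ)
    (hω : ∀ n α : ℕ, ω (n + 1) α = H n (α + 1) * Ring.inverse (H n α))
    (hε0 : ∀ α : ℕ, ε 0 α = 0)
    (hε : ∀ n α : ℕ, ε (n + 1) α = H (n + 1) α * Ring.inverse (H n (α + θ))) :
    ∀ n : ℕ, 1 ≤ n → ∀ α : ℕ,
      ω (n + 1) α * ε n α = ε n (α + 1) * ω n (α + θ) ∧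
      ω n (α + θ) + ε (n - 1) (α + 1) = ω n α + ε n α := by
  have hω_eq : ∀ m β, ω (m + 1) β =
      subleadingCoeff (P m (β + 1)) m - subleadingCoeff (P (m + 1) β) (m + 1) := fun m β => by
    rw [hω, H_add_one_eq hWint hM hPmonic hPorth hHdef,
      Ring.mul_inverse_cancel_right _ _ (hHunit m β)]
  have hε_eq : ∀ m β, ε m β = subleadingCoeff (P m β) m - subleadingCoeff (P m (β + θ)) m := by
    rintro (_ | m) β
    · rw [hε0, subleadingCoeff_zero, subleadingCoeff_zero, sub_zero]
    · rw [hε, H_succ_eq hWint hM hPmonic hPorth hHdef,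
        Ring.mul_inverse_cancel_right _ _ (hHunit m (β + θ))]
  intro n hn α
  obtain ⟨m, rfl⟩ := Nat.exists_eq_add_of_le' hn
  constructor
  · rw [hω, hε, hε, hω, mul_assoc, Ring.inverse_mul_cancel_left _ _ (hHunit _ _), mul_assoc,
      add_right_comm α θ 1, Ring.inverse_mul_cancel_left _ _ (hHunit _ _)]
  · rw [hω_eq, hε_eq, hω_eq, hε_eq, Nat.add_sub_cancel, add_right_comm α θ 1]
    abel

/-- discrete non-commutative hungry Toda-I lattice from
orthogonality, with `ω_n^{(α)} = H_{n-1}^{(α+1)}·(H_{n-1}^{(α)})⁻¹` (n ≥ 1),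
`ε_n^{(α)} = H_n^{(α)}·(H_{n-1}^{(α+θ)})⁻¹` (n ≥ 1) and `ε_0^{(α)} = 0`. -/
theorem statement11
    (p θ : ℕ) (hp : 1 ≤ p) (hθ : 1 ≤ θ)
    (W : ℝ → Matrix (Fin p) (Fin p) ℝ)
    (hWmeas : ∀ i j : Fin p, Measurable fun x : ℝ => W x i j)
    (hWint : ∀ (k : ℕ) (i j : Fin p), Integrable fun x : ℝ => x ^ k * W x i j)
    (hM : ∀ (n α : ℕ), 1 ≤ n → IsUnit (momMat θ W n α))
    (P Q : ℕ → ℕ → Polynomial (Matrix (Fin p) (Fin p) ℝ))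
    (hPmonic : ∀ n α : ℕ, MonicDeg (P n α) n)
    (hPorth : ∀ n α : ℕ, ∀ i < n, bform θ W α (P n α) (X ^ i) = 0)
    (hQmonic : ∀ n α : ℕ, MonicDeg (Q n α) n)
    (hQorth : ∀ n α : ℕ, ∀ i < n, bform θ W α (X ^ i) (Q n α) = 0)
    (H : ℕ → ℕ → Matrix (Fin p) (Fin p) ℝ)
    (hHdef : ∀ n α : ℕ, H n α = bform θ W α (P n α) (X ^ n))
    (hHunit : ∀ n α : ℕ, IsUnit (H n α))
    (ω ε : ℕ → ℕ → Matrix (Fin p) (Fin p) ℝ)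
    (hω : ∀ n α : ℕ, ω (n + 1) α = H n (α + 1) * Ring.inverse (H n α))
    (hε0 : ∀ α : ℕ, ε 0 α = 0)
    (hε : ∀ n α : ℕ, ε (n + 1) α = H (n + 1) α * Ring.inverse (H n (α + θ))) :
    ∀ n : ℕ, 1 ≤ n → ∀ α : ℕ,
      ω (n + 1) α * ε n α = ε n (α + 1) * ω n (α + θ) ∧
      ω n (α + θ) + ε (n - 1) (α + 1) = ω n α + ε n α :=
  statement11_general p θ W hWint hM P hPmonic hPorth H hHdef hHunit ω ε hω hε0 hε
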